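/- Let ψ be a never-vanishing C^{2,1} solution of the Schrödinger equation ∂ψ/∂t = (iℏ/2m)Δψ − (i/ℏ)Vψ. Define L_b f := v_q·∇f − (iℏ/2m)Δf with v_q = (ℏ/(im))∇(log ψ), and H f := −(ℏ²/2m)Δf + Vf. Then for every C^{2,1} function f with compact support, (∂/∂t + L_b) f = ψ^{−1} (∂/∂t + (i/ℏ)H)(ψ f). -/

import Mathlib

open Complex Set

noncomputable def pderiv' {n : ℕ} (i : Fin n) (f : (Fin n → ℝ) → ℂ) (x : Fin n → ℝ) : ℂ :=
  deriv (fun s => f (Function.update x i s)) (x i)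

noncomputable def lap' {n : ℕ} (f : (Fin n → ℝ) → ℂ) (x : Fin n → ℝ) : ℂ :=
  ∑ i, pderiv' i (fun y => pderiv' i f y) x

/-! The conjugation is a pointwise identity: the product rule for `∂ₜ` and `Δ`, with
`Δ(ψ f) = (Δψ) f + 2 ∇ψ·∇f + ψ Δf`, together with the Schrödinger equation for `∂ₜψ`, reduces
both sides to the same expression; the potential terms `± (i/ℏ) V ψ f` cancel and the cross term
`2 ∇ψ·∇f` produces the drift `v_q·∇f`. -/

section PartialDerivatives

variable {n : ℕ} (i : Fin n) {g h : (Fin n → ℝ) → ℂ} {x : Fin n → ℝ}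

lemma DifferentiableAt.comp_update (hg : DifferentiableAt ℝ g x) :
    DifferentiableAt ℝ (fun s => g (Function.update x i s)) (x i) := by
  rw [← Function.update_eq_self i x] at hg
  exact hg.comp (x i) (hasDerivAt_update x i (x i)).differentiableAt

lemma pderiv'_eq_fderiv (hg : DifferentiableAt ℝ g x) :
    pderiv' i g x = fderiv ℝ g x (Pi.single i 1) := by
  rw [← Function.update_eq_self i x] at hg
  have := hg.hasFDerivAt.comp_hasDerivAt (x i) (hasDerivAt_update x i (x i))
  rw [Function.update_eq_self] at this
  exact this.deriv

lemma pderiv'_add (hg : DifferentiableAt ℝ g x) (hh : DifferentiableAt ℝ h x) :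
    pderiv' i (fun y => g y + h y) x = pderiv' i g x + pderiv' i h x :=
  deriv_fun_add (hg.comp_update i) (hh.comp_update i)

lemma pderiv'_mul (hg : DifferentiableAt ℝ g x) (hh : DifferentiableAt ℝ h x) :
    pderiv' i (fun y => g y * h y) x = pderiv' i g x * h x + g x * pderiv' i h x := by
  rw [pderiv', deriv_fun_mul (hg.comp_update i) (hh.comp_update i), Function.update_eq_self]
  rfl

lemma ContDiff.differentiable_pderiv' (hg : ContDiff ℝ 2 g) : Differentiable ℝ (pderiv' i g) := by
  have hfd : pderiv' i g = fun y => fderiv ℝ g y (Pi.single i 1) :=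
    funext fun y => pderiv'_eq_fderiv i (hg.differentiable two_ne_zero y)
  rw [hfd]
  exact ((hg.fderiv_right (by norm_num)).clm_apply contDiff_const).differentiable one_ne_zero

lemma pderiv'_pderiv'_mul (hg : ContDiff ℝ 2 g) (hh : ContDiff ℝ 2 h) :
    pderiv' i (pderiv' i fun y => g y * h y) x
      = pderiv' i (pderiv' i g) x * h x + 2 * (pderiv' i g x * pderiv' i h x)
        + g x * pderiv' i (pderiv' i h) x := by
  have hgd := hg.differentiable two_ne_zero
  have hhd := hh.differentiable two_ne_zero
  have hdg := hg.differentiable_pderiv' i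
  have hdh := hh.differentiable_pderiv' i
  have hprod : pderiv' i (fun y => g y * h y)
      = fun y => pderiv' i g y * h y + g y * pderiv' i h y :=
    funext fun y => pderiv'_mul i (hgd y) (hhd y)
  rw [hprod, pderiv'_add i (g := fun y => pderiv' i g y * h y) (h := fun y => g y * pderiv' i h y)
      ((hdg x).mul (hhd x)) ((hgd x).mul (hdh x)),
    pderiv'_mul i (hdg x) (hhd x), pderiv'_mul i (hgd x) (hdh x)]
  ring

lemma lap'_mul (hg : ContDiff ℝ 2 g) (hh : ContDiff ℝ 2 h) (x : Fin n → ℝ) :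
    lap' (fun y => g y * h y) x
      = lap' g x * h x + 2 * ∑ i, pderiv' i g x * pderiv' i h x + g x * lap' h x := by
  simp only [lap', pderiv'_pderiv'_mul _ hg hh, Finset.sum_add_distrib, Finset.sum_mul,
    Finset.mul_sum]

end PartialDerivatives

section Slices

variable {E : Type*} [NormedAddCommGroup E] [NormedSpace ℝ E] {u : ℝ → E → ℂ} {k : WithTop ℕ∞}

lemma ContDiff.contDiff_slice_space (hu : ContDiff ℝ k fun p : ℝ × E => u p.1 p.2) (t : ℝ) :
    ContDiff ℝ k (u t) :=
  hu.comp (contDiff_prodMk_right t)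

lemma ContDiff.differentiableAt_slice_time (hu : ContDiff ℝ k fun p : ℝ × E => u p.1 p.2)
    (hk : k ≠ 0) (x : E) (t : ℝ) : DifferentiableAt ℝ (fun s => u s x) t :=
  (hu.comp (contDiff_prodMk_left x)).differentiable hk t

end Slices

theorem bidirectional_generator_hamiltonian_conjugation_general
    {n : ℕ} (hbar m : ℝ) (hhbar : 0 < hbar) (hm : 0 < m)
    (V : (Fin n → ℝ) → ℝ)
    (t₀ t₁ : ℝ)
    (ψ : ℝ → (Fin n → ℝ) → ℂ)
    (hψ_smooth : ContDiff ℝ 2 (fun p : ℝ × (Fin n → ℝ) => ψ p.1 p.2))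
    (hψ_nonzero : ∀ t ∈ Icc t₀ t₁, ∀ x, ψ t x ≠ 0)
    (hψ_pde : ∀ t ∈ Icc t₀ t₁, ∀ x,
      deriv (fun s => ψ s x) t =
        (I * hbar / (2 * m)) * lap' (ψ t) x - (I / hbar) * (V x : ℂ) * ψ t x)
    (f : ℝ → (Fin n → ℝ) → ℂ)
    (hf_smooth : ContDiff ℝ 2 (fun p : ℝ × (Fin n → ℝ) => f p.1 p.2)) :
    ∀ t ∈ Icc t₀ t₁, ∀ x,
      -- (∂/∂t + L_b) f
      deriv (fun s => f s x) t
        + (∑ i, ((hbar : ℂ) / (I * m)) * (pderiv' i (ψ t) x / ψ t x) *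
              pderiv' i (f t) x)
        - (I * hbar / (2 * m)) * lap' (f t) x
      =
      -- ψ⁻¹ (∂/∂t + (i/ℏ)H)(ψ f)
      (ψ t x)⁻¹ *
        (deriv (fun s => ψ s x * f s x) t
          + (I / hbar) *
            (-(hbar ^ 2 / (2 * m)) * lap' (fun y => ψ t y * f t y) x
              + (V x : ℂ) * (ψ t x * f t x))) := by
  intro t ht x
  have hψx : ψ t x ≠ 0 := hψ_nonzero t ht x
  have hdrift : ∑ i, ((hbar : ℂ) / (I * m)) * (pderiv' i (ψ t) x / ψ t x) * pderiv' i (f t) x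
      = (hbar : ℂ) / (I * m) * (ψ t x)⁻¹ * ∑ i, pderiv' i (ψ t) x * pderiv' i (f t) x := by
    rw [Finset.mul_sum]
    exact Finset.sum_congr rfl fun i _ => by ring
  rw [deriv_fun_mul (hψ_smooth.differentiableAt_slice_time two_ne_zero x t)
      (hf_smooth.differentiableAt_slice_time two_ne_zero x t),
    lap'_mul (hψ_smooth.contDiff_slice_space t) (hf_smooth.contDiff_slice_space t),
    hψ_pde t ht x, hdrift, inv_mul_eq_div, eq_div_iff hψx]
  have hhbar' : (hbar : ℂ) ≠ 0 := ofReal_ne_zero.mpr hhbar.ne'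
  have hm' : (m : ℂ) ≠ 0 := ofReal_ne_zero.mpr hm.ne'
  field_simp
  linear_combination (2 * (hbar : ℂ) ^ 2 * ∑ i, pderiv' i (ψ t) x * pderiv' i (f t) x) * I_sq

/-- for a never-vanishing solution `ψ` of the Schrödinger
equation, with `L_b f = v_q·∇f − (iℏ/2m)Δf`, `v_q = (ℏ/(im))∇(log ψ)`, and
`H f = −(ℏ²/2m)Δf + Vf`, one has
`(∂/∂t + L_b) f = ψ⁻¹ (∂/∂t + (i/ℏ)H)(ψ f)` for compactly supported C^{2,1} `f`. -/
theorem bidirectional_generator_hamiltonian_conjugation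
    {n : ℕ} (hbar m : ℝ) (hhbar : 0 < hbar) (hm : 0 < m)
    (V : (Fin n → ℝ) → ℝ) (hV : Measurable V)
    (t₀ t₁ : ℝ) (ht : t₀ ≤ t₁)
    (ψ : ℝ → (Fin n → ℝ) → ℂ)
    (hψ_smooth : ContDiff ℝ 2 (fun p : ℝ × (Fin n → ℝ) => ψ p.1 p.2))
    (hψ_nonzero : ∀ t ∈ Icc t₀ t₁, ∀ x, ψ t x ≠ 0)
    (hψ_pde : ∀ t ∈ Icc t₀ t₁, ∀ x,
      deriv (fun s => ψ s x) t =
        (I * hbar / (2 * m)) * lap' (ψ t) x - (I / hbar) * (V x : ℂ) * ψ t x)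
    (f : ℝ → (Fin n → ℝ) → ℂ)
    (hf_smooth : ContDiff ℝ 2 (fun p : ℝ × (Fin n → ℝ) => f p.1 p.2))
    (hf_supp : HasCompactSupport (fun p : ℝ × (Fin n → ℝ) => f p.1 p.2)) :
    ∀ t ∈ Icc t₀ t₁, ∀ x,
      -- (∂/∂t + L_b) f
      deriv (fun s => f s x) t
        + (∑ i, ((hbar : ℂ) / (I * m)) * (pderiv' i (ψ t) x / ψ t x) *
              pderiv' i (f t) x)
        - (I * hbar / (2 * m)) * lap' (f t) x
      =
      -- ψ⁻¹ (∂/∂t + (i/ℏ)H)(ψ f)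
      (ψ t x)⁻¹ *
        (deriv (fun s => ψ s x * f s x) t
          + (I / hbar) *
            (-(hbar ^ 2 / (2 * m)) * lap' (fun y => ψ t y * f t y) x
              + (V x : ℂ) * (ψ t x * f t x))) :=
  bidirectional_generator_hamiltonian_conjugation_general hbar m hhbar hm V t₀ t₁ ψ hψ_smooth
    hψ_nonzero hψ_pde f hf_smooth
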